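/- Let p, q, x be elements of a free group of rank 2g with energy function ‖·‖ as above. Suppose ‖p‖ < ‖q‖, |q| ≤ |x|, and the product qx involves no cancellation (i.e. |qx| = |q| + |x|). Then ‖px‖ + ‖x⁻¹p⁻¹‖ < ‖qx‖ + ‖x⁻¹q⁻¹‖. -/

import Mathlib

/-!
The energy is the base-`(4g+1)` number whose digits are the letter indices of the reduced word,
so a word of larger energy is at least as long: `‖p‖ < ‖q‖` forces `|p| ≤ |q|`. Cancellation in
`p x` writes `p = a c`, `x = c⁻¹ b` and `p x = a b`. As a prefix of `p`, the word `a` has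
`‖a‖ < ‖q‖`, so the leading digits of `q x = q · x` beat those of `p x = a · b` by at least
`(4g+1)^|x|`. Dually `x⁻¹ p⁻¹ = b⁻¹ a⁻¹`, where `b⁻¹` is a prefix of `x⁻¹` and `|a| ≤ |q|, |x|`,
so `‖x⁻¹ p⁻¹‖` exceeds `‖x⁻¹ q⁻¹‖` by less than `(4g+1)^|x|`.
-/

/-- The index (in `{1, …, 4g}`) of a letter of the free group of rank `2g`. -/
def letterIndex (g : ℕ) (x : Fin (2 * g) × Bool) : ℕ :=
  if x.2 then x.1.val + 1 else 2 * g + x.1.val + 1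

/-- The energy of `w`: writing the reduced word of `w` as `σ_{j₁} ⋯ σ_{j_k}`, the
energy is `Σᵢ (4g+1)^(i-1) · jᵢ`, interpreting the letter indices as digits in
base `4g+1` (the later letters of the word are the less significant digits). -/
def energy (g : ℕ) (w : FreeGroup (Fin (2 * g))) : ℕ :=
  (((FreeGroup.toWord w).reverse.zipIdx.map Prod.swap).map
    (fun p => (4 * g + 1) ^ p.1 * letterIndex g p.2)).sum

namespace FreeGroup

variable {α : Type*} [DecidableEq α]

theorem exists_reduce_append_eq {u v : List (α × Bool)} (hu : IsReduced u) (hv : IsReduced v) :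
    ∃ u₁ w v₂, u = u₁ ++ w ∧ v = invRev w ++ v₂ ∧ reduce (u ++ v) = u₁ ++ v₂ := by
  induction u using List.reverseRecOn generalizing v with
  | nil => exact ⟨[], [], v, rfl, rfl, hv.reduce_eq⟩
  | append_singleton u a ih =>
    cases v with
    | nil => exact ⟨u ++ [a], [], [], (List.append_nil _).symm, rfl, by simpa using hu.reduce_eq⟩
    | cons b v =>
      by_cases hab : a.1 = b.1 → a.2 = b.2
      · refine ⟨u ++ [a], [], b :: v, (List.append_nil _).symm, rfl, IsReduced.reduce_eq ?_⟩
        exact List.IsChain.append hu hv (by simpa using hab)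
      · have hb : b = (a.1, !a.2) := by
          obtain ⟨a1, a2⟩ := a; obtain ⟨b1, b2⟩ := b
          cases a2 <;> cases b2 <;> simp_all
        subst hb
        obtain ⟨u₁, w, v₂, rfl, rfl, h⟩ :=
          ih (hu.infix (List.prefix_append _ _).isInfix) (hv.infix (List.suffix_cons _ _).isInfix)
        refine ⟨u₁, w ++ [a], v₂, by simp, by simp [invRev], ?_⟩
        rw [← h]
        exact reduce.Step.eq (by simpa using Red.Step.not (L₁ := u₁ ++ w) (L₂ := invRev w ++ v₂))

theorem exists_toWord_mul (x y : FreeGroup α) :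
    ∃ u w v, x.toWord = u ++ w ∧ y.toWord = invRev w ++ v ∧ (x * y).toWord = u ++ v := by
  rw [toWord_mul]
  exact exists_reduce_append_eq isReduced_toWord isReduced_toWord

theorem toWord_mul_of_norm_mul {x y : FreeGroup α} (h : norm (x * y) = norm x + norm y) :
    (x * y).toWord = x.toWord ++ y.toWord :=
  (toWord_mul_sublist x y).eq_of_length (by simpa [norm] using h)

end FreeGroup

section WordEnergy

variable {g : ℕ}

theorem one_le_letterIndex (ℓ : Fin (2 * g) × Bool) : 1 ≤ letterIndex g ℓ := by
  unfold letterIndex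
  split <;> omega

theorem letterIndex_lt (ℓ : Fin (2 * g) × Bool) : letterIndex g ℓ < 4 * g + 1 := by
  have := ℓ.1.isLt
  unfold letterIndex
  split <;> omega

-- `Nat.ofDigits` reads its digits least significant first, hence the reversal.
variable (g) in
def wordEnergy (L : List (Fin (2 * g) × Bool)) : ℕ :=
  Nat.ofDigits (4 * g + 1) (L.reverse.map (letterIndex g))

variable (g) in
theorem energy_eq_wordEnergy (w : FreeGroup (Fin (2 * g))) :
    energy g w = wordEnergy g w.toWord := by
  simp only [energy, wordEnergy, Nat.ofDigits_eq_sum_mapIdx, List.mapIdx_eq_zipIdx_map,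
    List.zipIdx_map, List.map_map]
  exact congrArg List.sum (List.map_congr_left fun _ _ => mul_comm _ _)

theorem wordEnergy_append (L₁ L₂ : List (Fin (2 * g) × Bool)) :
    wordEnergy g (L₁ ++ L₂) = wordEnergy g L₁ * (4 * g + 1) ^ L₂.length + wordEnergy g L₂ := by
  simp only [wordEnergy, List.reverse_append, List.map_append, Nat.ofDigits_append,
    List.length_map, List.length_reverse]
  ring

theorem wordEnergy_cons (ℓ : Fin (2 * g) × Bool) (L : List (Fin (2 * g) × Bool)) :
    wordEnergy g (ℓ :: L) = letterIndex g ℓ * (4 * g + 1) ^ L.length + wordEnergy g L := by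
  simpa [wordEnergy] using wordEnergy_append [ℓ] L

theorem wordEnergy_lt_pow_length (L : List (Fin (2 * g) × Bool)) :
    wordEnergy g L < (4 * g + 1) ^ L.length := by
  rcases L with _ | ⟨ℓ, L⟩
  · simp [wordEnergy]
  · have : 0 < g := by have := ℓ.1.pos; omega
    refine (Nat.ofDigits_lt_base_pow_length (by omega) ?_).trans_eq (by simp)
    simp only [List.mem_map]
    rintro _ ⟨ℓ', -, rfl⟩
    exact letterIndex_lt ℓ'

theorem pow_length_le_wordEnergy_cons (ℓ : Fin (2 * g) × Bool) (L : List (Fin (2 * g) × Bool)) :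
    (4 * g + 1) ^ L.length ≤ wordEnergy g (ℓ :: L) := by
  rw [wordEnergy_cons]
  exact (Nat.le_mul_of_pos_left _ (one_le_letterIndex ℓ)).trans (Nat.le_add_right _ _)

theorem length_le_of_wordEnergy_lt {L₁ L₂ : List (Fin (2 * g) × Bool)}
    (h : wordEnergy g L₁ < wordEnergy g L₂) : L₁.length ≤ L₂.length := by
  rcases L₁ with _ | ⟨ℓ, L⟩
  · exact Nat.zero_le _
  · by_contra! hlen
    have hlt := (pow_length_le_wordEnergy_cons ℓ L).trans_lt (h.trans (wordEnergy_lt_pow_length L₂))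
    have hle : (4 * g + 1) ^ L₂.length ≤ (4 * g + 1) ^ L.length :=
      Nat.pow_le_pow_right (by omega) (by simpa [Nat.lt_succ_iff] using hlen)
    omega

theorem wordEnergy_le_append_left (L₁ L₂ : List (Fin (2 * g) × Bool)) :
    wordEnergy g L₁ ≤ wordEnergy g (L₁ ++ L₂) := by
  rw [wordEnergy_append]
  exact (Nat.le_mul_of_pos_right _ (by positivity)).trans (Nat.le_add_right _ _)

theorem wordEnergy_le_append_right (L₁ L₂ : List (Fin (2 * g) × Bool)) :
    wordEnergy g L₂ ≤ wordEnergy g (L₁ ++ L₂) := by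
  rw [wordEnergy_append]
  exact Nat.le_add_left _ _

end WordEnergy

section EnergyComparison

open FreeGroup

variable {g : ℕ} {p q x : FreeGroup (Fin (2 * g))}

theorem norm_le_norm_of_energy_lt (h : energy g p < energy g q) : norm p ≤ norm q := by
  rw [energy_eq_wordEnergy, energy_eq_wordEnergy] at h
  exact length_le_of_wordEnergy_lt h

theorem energy_mul_add_pow_norm_le (hpq : energy g p < energy g q)
    (hred : norm (q * x) = norm q + norm x) :
    energy g (p * x) + (4 * g + 1) ^ norm x ≤ energy g (q * x) := by
  obtain ⟨a, c, b, hp, hx, hmul⟩ := exists_toWord_mul p x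
  rw [energy_eq_wordEnergy, energy_eq_wordEnergy] at hpq
  have ha : wordEnergy g a < wordEnergy g q.toWord :=
    (wordEnergy_le_append_left a c).trans_lt (hp ▸ hpq)
  have hb : wordEnergy g b ≤ wordEnergy g x.toWord := hx ▸ wordEnergy_le_append_right _ _
  have hpow : (4 * g + 1) ^ b.length ≤ (4 * g + 1) ^ x.toWord.length :=
    Nat.pow_le_pow_right (by omega) (by simp [hx])
  rw [energy_eq_wordEnergy, energy_eq_wordEnergy, hmul, toWord_mul_of_norm_mul hred,
    wordEnergy_append, wordEnergy_append, FreeGroup.norm]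
  calc wordEnergy g a * (4 * g + 1) ^ b.length + wordEnergy g b + (4 * g + 1) ^ x.toWord.length
      ≤ (wordEnergy g a + 1) * (4 * g + 1) ^ x.toWord.length + wordEnergy g x.toWord := by
        linarith [Nat.mul_le_mul_left (wordEnergy g a) hpow]
    _ ≤ wordEnergy g q.toWord * (4 * g + 1) ^ x.toWord.length + wordEnergy g x.toWord := by
        gcongr
        exact ha

theorem energy_inv_mul_inv_lt (hpq : norm p ≤ norm q) (hpx : norm p ≤ norm x)
    (hred : norm (q * x) = norm q + norm x) :
    energy g (x⁻¹ * p⁻¹) < energy g (x⁻¹ * q⁻¹) + (4 * g + 1) ^ norm x := by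
  obtain ⟨a, c, b, hp, hx, hmul⟩ := exists_toWord_mul p x
  have hlen : a.length ≤ p.toWord.length := by simp [hp]
  have hb : wordEnergy g (invRev b) ≤ wordEnergy g (invRev x.toWord) := by
    rw [hx, invRev_append, invRev_invRev]
    exact wordEnergy_le_append_left _ _
  have hpow : (4 * g + 1) ^ a.length ≤ (4 * g + 1) ^ q.toWord.length :=
    Nat.pow_le_pow_right (by omega) (hlen.trans hpq)
  have ha : wordEnergy g (invRev a) < (4 * g + 1) ^ norm x :=
    (wordEnergy_lt_pow_length _).trans_le
      (Nat.pow_le_pow_right (by omega) (by simpa [invRev_length] using hlen.trans hpx))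
  rw [← mul_inv_rev, ← mul_inv_rev, energy_eq_wordEnergy, energy_eq_wordEnergy, toWord_inv,
    toWord_inv, hmul, toWord_mul_of_norm_mul hred, invRev_append, invRev_append,
    wordEnergy_append, wordEnergy_append, invRev_length, invRev_length]
  linarith [Nat.mul_le_mul hb hpow]

end EnergyComparison

/-- Lemma (plq): if `‖p‖ < ‖q‖`, `|q| ≤ |x|`, and the product `q*x` involves no
cancellation, then `‖p*x‖ + ‖x⁻¹*p⁻¹‖ < ‖q*x‖ + ‖x⁻¹*q⁻¹‖`. -/
theorem energy_comparison (g : ℕ) (p q x : FreeGroup (Fin (2 * g)))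
    (hpq : energy g p < energy g q)
    (hqx : FreeGroup.norm q ≤ FreeGroup.norm x)
    (hred : FreeGroup.norm (q * x) = FreeGroup.norm q + FreeGroup.norm x) :
    energy g (p * x) + energy g (x⁻¹ * p⁻¹) <
      energy g (q * x) + energy g (x⁻¹ * q⁻¹) := by
  have hnorm := norm_le_norm_of_energy_lt hpq
  have hleft := energy_mul_add_pow_norm_le hpq hred
  have hright := energy_inv_mul_inv_lt hnorm (hnorm.trans hqx) hred
  omega
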